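/- Sharpness lemma: Let Ω ⊆ ℝ^n be open with closure equal to ℝ^n, and let f : Ω → (0,∞) be twice continuously differentiable. Assume there exist δ₀ > 0 and C < ∞ such that (i) ∫_Ω f(x)^{1−δ}·e^{−|x|} dx ≤ C for all δ ∈ (0,δ₀), and (ii) I(δ) := ∫_Ω ( |∇f(x)|²/f(x)² )·f(x)^{1−δ}·e^{−|x|} dx is finite for all δ ∈ (0,δ₀) and I(δ) → ∞ as δ → 0⁺. Then for every ε > 0 there exists δ ∈ (0,δ₀) such that the function u_δ(x) := f(x)^{(1−δ)/2}·e^{−|x|/2} satisfies ∫_Ω |∇u_δ|² dx ≤ (1/4 + ε)·∫_Ω ( |∇f|²/f² )·|u_δ|² dx. -/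

import Mathlib

open MeasureTheory Real Filter

theorem key_ineq (t ε q : ℝ) (ht : 0 ≤ t) (hε : 0 < ε) (hq : |q| ≤ 1/2) :
    (q*t + 1/2)^2 ≤ (1/4+ε/2)*t^2 + (1+1/(2*ε))*(1/4) := by
  obtain ⟨h1, h2⟩ := abs_le.mp hq
  have step1 : (q*t + 1/2)^2 ≤ (t/2 + 1/2)^2 := by
    have habs : |q*t + 1/2| ≤ t/2 + 1/2 := by
      rw [abs_le]; constructor <;> nlinarith
    calc (q*t + 1/2)^2 = |q*t + 1/2|^2 := (sq_abs _).symm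
      _ ≤ (t/2 + 1/2)^2 := by apply pow_le_pow_left₀ (abs_nonneg _) habs
  have step2 : t/2 ≤ (ε/2)*t^2 + 1/(8*ε) := by
    rw [← sub_nonneg]
    have : (ε/2)*t^2 + 1/(8*ε) - t/2 = (2*ε*t-1)^2 / (8*ε) := by field_simp; ring
    rw [this]; positivity
  have h3 : (1+1/(2*ε))*(1/4) = 1/4 + 1/(8*ε) := by field_simp; ring
  nlinarith [step1, step2]

theorem norm_gradient_eq {n : ℕ} (g : EuclideanSpace ℝ (Fin n) → ℝ)
    (x : EuclideanSpace ℝ (Fin n)) : ‖gradient g x‖ = ‖fderiv ℝ g x‖ := by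
  rw [gradient]; exact LinearIsometryEquiv.norm_map _ _

theorem ptwise {n : ℕ} (f : EuclideanSpace ℝ (Fin n) → ℝ) (x : EuclideanSpace ℝ (Fin n))
    (hx0 : x ≠ 0) (hdf : DifferentiableAt ℝ f x) (hFpos : 0 < f x) (δ ε : ℝ)
    (hδ : 0 < δ) (hδ2 : δ ≤ 2) (hε : 0 < ε) :
    ‖gradient (fun y => f y ^ ((1-δ)/2) * Real.exp (-‖y‖/2)) x‖^2
      ≤ (1/4+ε/2) * (‖gradient f x‖^2 / f x^2 * (f x ^ (1-δ) * Real.exp (-‖x‖)))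
        + (1+1/(2*ε))*(1/4) * (f x ^ (1-δ) * Real.exp (-‖x‖)) := by
  set p : ℝ := (1-δ)/2 with hpdef
  set E : ℝ := Real.exp (-‖x‖/2) with hEdef
  set G : ℝ := f x ^ p with hGdef
  set a : ℝ := ‖fderiv ℝ f x‖ with hadef
  have hEpos : 0 < E := Real.exp_pos _
  have hGpos : 0 < G := Real.rpow_pos_of_pos hFpos _
  have hnd : DifferentiableAt ℝ (fun y : EuclideanSpace ℝ (Fin n) => ‖y‖) x :=
    (contDiffAt_norm ℝ (n := 1) hx0).differentiableAt one_ne_zero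
  set N := fderiv ℝ (fun y : EuclideanSpace ℝ (Fin n) => ‖y‖) x with hNdef
  have hN : HasFDerivAt (fun y : EuclideanSpace ℝ (Fin n) => ‖y‖) N x := hnd.hasFDerivAt
  have hNle : ‖N‖ ≤ 1 := by
    simpa using hN.le_of_lipschitz lipschitzWith_one_norm
  have h2' : HasFDerivAt (fun y : EuclideanSpace ℝ (Fin n) => -‖y‖/2) ((-1/2 : ℝ) • N) x := by
    have h := hN.const_mul (-1/2 : ℝ)
    have heq : (fun y : EuclideanSpace ℝ (Fin n) => -1/2 * ‖y‖)
        = (fun y : EuclideanSpace ℝ (Fin n) => -‖y‖/2) := by funext y; ring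
    rwa [heq] at h
  have h2 : HasFDerivAt (fun y : EuclideanSpace ℝ (Fin n) => Real.exp (-‖y‖/2))
      (E • ((-1/2 : ℝ) • N)) x := h2'.exp
  have h1 : HasFDerivAt (fun y => f y ^ p) ((p * f x ^ (p-1)) • fderiv ℝ f x) x :=
    hdf.hasFDerivAt.rpow_const (Or.inl hFpos.ne')
  have hu : HasFDerivAt (fun y => f y ^ p * Real.exp (-‖y‖/2))
      (G • (E • ((-1/2 : ℝ) • N)) + E • ((p * f x ^ (p-1)) • fderiv ℝ f x)) x := h1.mul h2
  set t : ℝ := a / f x with htdef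
  have ht : 0 ≤ t := div_nonneg (norm_nonneg _) hFpos.le
  have hpabs : |p| ≤ 1/2 := by rw [abs_le]; constructor <;> [skip; skip] <;> rw [hpdef] <;> linarith
  have hfp1 : f x ^ (p - 1) = G / f x := by
    rw [hGdef, Real.rpow_sub hFpos, Real.rpow_one]
  have hb : ‖fderiv ℝ (fun y => f y ^ p * Real.exp (-‖y‖/2)) x‖ ≤ E*G*(|p| * t + 1/2) := by
    rw [hu.fderiv]
    calc ‖G • (E • ((-1/2 : ℝ) • N)) + E • ((p * f x ^ (p-1)) • fderiv ℝ f x)‖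
        ≤ ‖G • (E • ((-1/2 : ℝ) • N))‖ + ‖E • ((p * f x ^ (p-1)) • fderiv ℝ f x)‖ :=
          norm_add_le _ _
      _ = G * (E * ((1/2) * ‖N‖)) + E * ((|p| * (G / f x)) * a) := by
          rw [norm_smul, norm_smul, norm_smul, norm_smul, norm_smul,
            Real.norm_eq_abs, Real.norm_eq_abs, Real.norm_eq_abs, Real.norm_eq_abs,
            abs_of_pos hGpos, abs_of_pos hEpos, abs_mul, hfp1,
            abs_of_pos (div_pos hGpos hFpos)]
          norm_num
          exact Or.inl (Or.inl hadef.symm)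
      _ ≤ G * (E * ((1/2) * 1)) + E * ((|p| * (G / f x)) * a) := by gcongr
      _ = E*G*(|p| * t + 1/2) := by rw [htdef]; field_simp; ring
  have hbsq : ‖fderiv ℝ (fun y => f y ^ p * Real.exp (-‖y‖/2)) x‖^2
      ≤ (E*G)^2 * ((|p| * t + 1/2)^2) := by
    have h0 : (0:ℝ) ≤ E*G*(|p| * t + 1/2) := by positivity
    calc ‖fderiv ℝ (fun y => f y ^ p * Real.exp (-‖y‖/2)) x‖^2
        ≤ (E*G*(|p| * t + 1/2))^2 := by
          apply pow_le_pow_left₀ (norm_nonneg _) hb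
      _ = (E*G)^2 * ((|p| * t + 1/2)^2) := by ring
  have hkey := key_ineq t ε |p| ht hε (by rwa [abs_abs])
  have hmain : ‖fderiv ℝ (fun y => f y ^ p * Real.exp (-‖y‖/2)) x‖^2
      ≤ (E*G)^2 * ((1/4+ε/2)*t^2 + (1+1/(2*ε))*(1/4)) := by
    refine hbsq.trans ?_
    exact mul_le_mul_of_nonneg_left hkey (by positivity)
  -- rewrite the goal
  have hG2 : f x ^ (1-δ) = G * G := by
    rw [hGdef, ← Real.rpow_add hFpos, show p + p = 1 - δ by rw [hpdef]; ring]
  have hE2 : Real.exp (-‖x‖) = E * E := by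
    rw [hEdef, ← Real.exp_add]; ring_nf
  have ht2 : ‖gradient f x‖^2 / f x ^ 2 = t^2 := by
    rw [norm_gradient_eq, htdef, div_pow]
  rw [norm_gradient_eq, ht2, hG2, hE2]
  calc ‖fderiv ℝ (fun y => f y ^ p * Real.exp (-‖y‖/2)) x‖^2
      ≤ (E*G)^2 * ((1/4+ε/2)*t^2 + (1+1/(2*ε))*(1/4)) := hmain
    _ = (1/4+ε/2) * (t^2 * (G*G*(E*E))) + (1+1/(2*ε))*(1/4) * (G*G*(E*E)) := by ring

/-- **Sharpness lemma.** Let `Ω ⊆ ℝⁿ` be open with closure `ℝⁿ`, and `f` twice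
continuously differentiable and positive on `Ω`. If (i) `∫_Ω f^{1−δ} e^{−|x|}` is
uniformly bounded for `δ ∈ (0,δ₀)`, and (ii) `I(δ) := ∫_Ω (|∇f|²/f²) f^{1−δ} e^{−|x|}`
is finite for `δ ∈ (0,δ₀)` but `I(δ) → ∞` as `δ → 0⁺`, then for every `ε > 0` there is
`δ ∈ (0,δ₀)` such that `u_δ(x) := f(x)^{(1−δ)/2} e^{−|x|/2}` satisfies
`∫_Ω |∇u_δ|² ≤ (1/4 + ε) ∫_Ω (|∇f|²/f²) |u_δ|²`. -/
theorem sharpness_lemma (n : ℕ) (Ω : Set (EuclideanSpace ℝ (Fin n))) (hΩ : IsOpen Ω)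
    (hΩ_dense : closure Ω = Set.univ)
    (f : EuclideanSpace ℝ (Fin n) → ℝ) (hf_pos : ∀ x ∈ Ω, 0 < f x)
    (hf : ContDiffOn ℝ 2 f Ω)
    (δ₀ : ℝ) (hδ₀ : 0 < δ₀) (C : ℝ)
    (h_i : ∀ δ ∈ Set.Ioo (0 : ℝ) δ₀,
      IntegrableOn (fun x => f x ^ (1 - δ) * Real.exp (-‖x‖)) Ω volume ∧
        (∫ x in Ω, f x ^ (1 - δ) * Real.exp (-‖x‖)) ≤ C)
    (h_ii_fin : ∀ δ ∈ Set.Ioo (0 : ℝ) δ₀,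
      IntegrableOn
        (fun x => ‖gradient f x‖ ^ 2 / f x ^ 2 * (f x ^ (1 - δ) * Real.exp (-‖x‖))) Ω volume)
    (h_ii_div : Tendsto
      (fun δ : ℝ =>
        ∫ x in Ω, ‖gradient f x‖ ^ 2 / f x ^ 2 * (f x ^ (1 - δ) * Real.exp (-‖x‖)))
      (nhdsWithin 0 (Set.Ioi 0)) atTop) :
    ∀ ε > (0 : ℝ), ∃ δ ∈ Set.Ioo (0 : ℝ) δ₀,
      (∫ x in Ω,
          ‖gradient (fun y => f y ^ ((1 - δ) / 2) * Real.exp (-‖y‖ / 2)) x‖ ^ 2)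
        ≤ (1 / 4 + ε) *
            ∫ x in Ω, ‖gradient f x‖ ^ 2 / f x ^ 2 *
              |f x ^ ((1 - δ) / 2) * Real.exp (-‖x‖ / 2)| ^ 2 := by

  intro ε hε
  rcases subsingleton_or_nontrivial (EuclideanSpace ℝ (Fin n)) with hsub | hnt
  · refine ⟨δ₀/2, ⟨by linarith, by linarith⟩, ?_⟩
    have hz : ∀ x : EuclideanSpace ℝ (Fin n),
        gradient (fun y => f y ^ ((1 - δ₀/2) / 2) * Real.exp (-‖y‖ / 2)) x = 0 :=
      fun x => Subsingleton.elim _ _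
    have hL : (∫ x in Ω,
        ‖gradient (fun y => f y ^ ((1 - δ₀/2) / 2) * Real.exp (-‖y‖ / 2)) x‖ ^ 2) = 0 := by
      simp [hz]
    rw [hL]
    apply mul_nonneg (by linarith)
    apply setIntegral_nonneg hΩ.measurableSet
    intro x hx
    positivity
  · set I : ℝ → ℝ := fun δ =>
      ∫ x in Ω, ‖gradient f x‖ ^ 2 / f x ^ 2 * (f x ^ (1 - δ) * Real.exp (-‖x‖)) with hIdef
    set K : ℝ := (1 + 1/(2*ε)) * (1/4) * C with hKdef
    set M : ℝ := max 0 (2*K/ε) with hMdef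
    have hmem : Set.Ioo (0:ℝ) (min δ₀ 2) ∈ nhdsWithin (0:ℝ) (Set.Ioi 0) :=
      Ioo_mem_nhdsGT_of_mem ⟨le_refl 0, lt_min hδ₀ (by norm_num)⟩
    have hev := (h_ii_div.eventually_ge_atTop M).and
      (Filter.eventually_of_mem hmem (fun x hx => hx))
    obtain ⟨δ, hIM, hδIoo⟩ := hev.exists
    have hδ0 : 0 < δ := hδIoo.1
    have hδδ₀ : δ < δ₀ := lt_of_lt_of_le hδIoo.2 (min_le_left _ _)
    have hδ2 : δ ≤ 2 := le_of_lt (lt_of_lt_of_le hδIoo.2 (min_le_right _ _))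
    have hδmem : δ ∈ Set.Ioo (0:ℝ) δ₀ := ⟨hδ0, hδδ₀⟩
    refine ⟨δ, hδmem, ?_⟩
    have hRHS : (∫ x in Ω, ‖gradient f x‖ ^ 2 / f x ^ 2 *
        |f x ^ ((1 - δ) / 2) * Real.exp (-‖x‖ / 2)| ^ 2) = I δ := by
      apply setIntegral_congr_fun hΩ.measurableSet
      intro x hx
      have hFpos := hf_pos x hx
      have h1 : |f x ^ ((1 - δ)/2) * Real.exp (-‖x‖/2)| ^ 2
          = f x ^ (1 - δ) * Real.exp (-‖x‖) := by
        rw [sq_abs, pow_two,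
          show (f x ^ ((1-δ)/2) * Real.exp (-‖x‖/2)) * (f x ^ ((1-δ)/2) * Real.exp (-‖x‖/2))
            = (f x ^ ((1-δ)/2) * f x ^ ((1-δ)/2)) * (Real.exp (-‖x‖/2) * Real.exp (-‖x‖/2))
            from by ring,
          ← Real.rpow_add hFpos, ← Real.exp_add,
          show (1-δ)/2 + (1-δ)/2 = 1 - δ from by ring,
          show -‖x‖/2 + -‖x‖/2 = -‖x‖ from by ring]
      dsimp only
      rw [h1]
    rw [hRHS]
    set g : EuclideanSpace ℝ (Fin n) → ℝ := fun x =>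
      (1/4 + ε/2) * (‖gradient f x‖ ^ 2 / f x ^ 2 * (f x ^ (1 - δ) * Real.exp (-‖x‖)))
        + (1 + 1/(2*ε)) * (1/4) * (f x ^ (1 - δ) * Real.exp (-‖x‖)) with hgdef
    have hgint : IntegrableOn g Ω volume :=
      ((h_ii_fin δ hδmem).const_mul _).add ((h_i δ hδmem).1.const_mul _)
    have hne : ∀ᵐ x : EuclideanSpace ℝ (Fin n) ∂volume, x ≠ 0 := by
      simp [ae_iff, measure_singleton]
    have hae : ∀ᵐ x ∂(volume.restrict Ω),
        ‖gradient (fun y => f y ^ ((1 - δ) / 2) * Real.exp (-‖y‖ / 2)) x‖ ^ 2 ≤ g x := by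
      filter_upwards [ae_restrict_mem hΩ.measurableSet, ae_restrict_of_ae hne] with x hxΩ hx0
      have hdf : DifferentiableAt ℝ f x :=
        (hf.differentiableOn (by norm_num)).differentiableAt (hΩ.mem_nhds hxΩ)
      exact ptwise f x hx0 hdf (hf_pos x hxΩ) δ ε hδ0 hδ2 hε
    have hfnonneg : 0 ≤ᵐ[volume.restrict Ω] fun x =>
        ‖gradient (fun y => f y ^ ((1 - δ) / 2) * Real.exp (-‖y‖ / 2)) x‖ ^ 2 :=
      Filter.Eventually.of_forall (fun x => by positivity)
    have hLle : (∫ x in Ω,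
        ‖gradient (fun y => f y ^ ((1 - δ) / 2) * Real.exp (-‖y‖ / 2)) x‖ ^ 2)
        ≤ ∫ x in Ω, g x := integral_mono_of_nonneg hfnonneg hgint hae
    have hgsplit : (∫ x in Ω, g x) = (1/4 + ε/2) * I δ
        + (1 + 1/(2*ε)) * (1/4) * (∫ x in Ω, f x ^ (1 - δ) * Real.exp (-‖x‖)) := by
      rw [hgdef]
      rw [integral_add ((h_ii_fin δ hδmem).const_mul _) ((h_i δ hδmem).1.const_mul _),
        integral_const_mul, integral_const_mul]
    have hJ : (∫ x in Ω, f x ^ (1 - δ) * Real.exp (-‖x‖)) ≤ C := (h_i δ hδmem).2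
    have hI0 : 0 ≤ I δ := setIntegral_nonneg hΩ.measurableSet
      (fun x hx => by have := hf_pos x hx; positivity)
    have hKC : (1 + 1/(2*ε)) * (1/4) * (∫ x in Ω, f x ^ (1 - δ) * Real.exp (-‖x‖)) ≤ K := by
      rw [hKdef]
      exact mul_le_mul_of_nonneg_left hJ (by positivity)
    have hKI : K ≤ (ε/2) * I δ := by
      have h1 : 2*K/ε ≤ I δ := le_trans (le_max_right _ _) hIM
      calc K = (ε/2) * (2*K/ε) := by field_simp
        _ ≤ (ε/2) * I δ := mul_le_mul_of_nonneg_left h1 (by positivity)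
    have hring : (1/4 + ε/2) * I δ + (ε/2) * I δ = (1/4 + ε) * I δ := by ring
    linarith [hLle, hgsplit, hKC, hKI]
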